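/- arXiv:2605.03313 — 2 statements merged into one kernel-verified Lean document; each statement's English description precedes it below -/
import Mathlib

section
/- Let f: ℝᵈ → ℝ be convex and L-smooth (L > 0). Let w, g ∈ ℝᵈ with ‖g - ∇f(w)‖ ≤ ε and ‖g‖ ≥ 4ε, and set w⁺ = w - g/(2L). Then f(w⁺) - f(w) ≤ (1/(2L))‖g‖(ε - 3‖g‖/4), and in particular f(w⁺) < f(w) when ‖g‖ > 0. -/
/-!
By the descent lemma, `f (w - η • g) - f w ≤ -η ⟪∇f w, g⟫ + (L/2) η² ‖g‖²`, and
`⟪∇f w, g⟫ = ‖g‖² - ⟪g - ∇f w, g⟫ ≥ ‖g‖² - ε ‖g‖` by Cauchy–Schwarz. With `η = 1/(2L)` the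
quadratic term is `η ‖g‖² / 4`, which leaves `η ‖g‖ (ε - 3‖g‖/4)`; this is negative once
`4ε ≤ ‖g‖` and `g ≠ 0`.
-/

open Set

section GradientStep

variable {E : Type*} [NormedAddCommGroup E] [InnerProductSpace ℝ E] {f : E → ℝ} {f' : E → E}

lemma hasDerivAt_comp_add_smul [CompleteSpace E] (hf' : ∀ x, HasGradientAt f (f' x) x)
    (w v : E) (t : ℝ) :
    HasDerivAt (fun s : ℝ => f (w + s • v)) (inner ℝ (f' (w + t • v)) v) t := by
  have hline : HasDerivAt (fun s : ℝ => w + s • v) v t := by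
    simpa using ((hasDerivAt_id t).smul_const v).const_add w
  exact (hf' (w + t • v)).hasFDerivAt.comp_hasDerivAt t hline

lemma inner_gradient_sub_le {L : ℝ} (hsmooth : ∀ x y, ‖f' x - f' y‖ ≤ L * ‖x - y‖)
    (w v : E) {t : ℝ} (ht : 0 ≤ t) :
    inner ℝ (f' (w + t • v) - f' w) v ≤ L * ‖v‖ ^ 2 * t :=
  calc inner ℝ (f' (w + t • v) - f' w) v
      ≤ ‖f' (w + t • v) - f' w‖ * ‖v‖ := real_inner_le_norm _ _
    _ ≤ L * ‖t • v‖ * ‖v‖ := by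
        gcongr
        simpa using hsmooth (w + t • v) w
    _ = L * ‖v‖ ^ 2 * t := by
        rw [norm_smul, Real.norm_of_nonneg ht]; ring

theorem le_add_inner_add_sq_of_lipschitz_gradient [CompleteSpace E]
    (hf' : ∀ x, HasGradientAt f (f' x) x)
    {L : ℝ} (hsmooth : ∀ x y, ‖f' x - f' y‖ ≤ L * ‖x - y‖) (w v : E) :
    f (w + v) ≤ f w + inner ℝ (f' w) v + L / 2 * ‖v‖ ^ 2 := by
  -- Compare `φ t = f (w + t • v) - t ⟪∇f w, v⟫` on `[0, 1]` with the parabola `B`.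
  set φ : ℝ → ℝ := fun t => f (w + t • v) - t * inner ℝ (f' w) v
  set B : ℝ → ℝ := fun t => f w + L / 2 * ‖v‖ ^ 2 * t ^ 2
  have hφ (t : ℝ) : HasDerivAt φ (inner ℝ (f' (w + t • v)) v - inner ℝ (f' w) v) t := by
    exact (hasDerivAt_comp_add_smul hf' w v t).sub
      (hasDerivAt_mul_const (inner ℝ (f' w) v))
  have hB (t : ℝ) : HasDerivAt B (L * ‖v‖ ^ 2 * t) t :=
    (((hasDerivAt_pow 2 t).const_mul (L / 2 * ‖v‖ ^ 2)).const_add (f w)).congr_deriv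
      (by push_cast; ring)
  have hφB : φ 1 ≤ B 1 := by
    refine image_le_of_deriv_right_le_deriv_boundary
      (fun t _ => (hφ t).continuousAt.continuousWithinAt)
      (fun t _ => (hφ t).hasDerivWithinAt) (by simp [φ, B])
      (fun t _ => (hB t).continuousAt.continuousWithinAt)
      (fun t _ => (hB t).hasDerivWithinAt) (fun t ht => ?_) (right_mem_Icc.2 zero_le_one)
    rw [← inner_sub_left]
    exact inner_gradient_sub_le hsmooth w v ht.1
  simp only [φ, B, one_smul, one_mul, one_pow, mul_one] at hφB
  linarith

lemma norm_sq_sub_mul_le_inner {a g : E} {ε : ℝ} (hg : ‖g - a‖ ≤ ε) :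
    ‖g‖ ^ 2 - ε * ‖g‖ ≤ inner ℝ a g := by
  have hsplit : inner ℝ a g = ‖g‖ ^ 2 - inner ℝ (g - a) g := by
    rw [inner_sub_left, real_inner_self_eq_norm_sq]; ring
  have hcs : inner ℝ (g - a) g ≤ ε * ‖g‖ :=
    (real_inner_le_norm _ _).trans (mul_le_mul_of_nonneg_right hg (norm_nonneg g))
  linarith

theorem approx_gradient_step_sub_le [CompleteSpace E] (hf' : ∀ x, HasGradientAt f (f' x) x)
    {L : ℝ} (hL : 0 < L) (hsmooth : ∀ x y, ‖f' x - f' y‖ ≤ L * ‖x - y‖)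
    {ε : ℝ} {w g : E} (hg : ‖g - f' w‖ ≤ ε) :
    f (w - (1 / (2 * L)) • g) - f w ≤ (1 / (2 * L)) * ‖g‖ * (ε - 3 * ‖g‖ / 4) := by
  set η := 1 / (2 * L) with hη
  have hη_pos : 0 < η := by positivity
  have hdescent := le_add_inner_add_sq_of_lipschitz_gradient hf' hsmooth w (-(η • g))
  rw [← sub_eq_add_neg, inner_neg_right, real_inner_smul_right, norm_neg, norm_smul,
    Real.norm_of_nonneg hη_pos.le] at hdescent
  have hquad : L / 2 * (η * ‖g‖) ^ 2 = η * ‖g‖ ^ 2 / 4 := by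
    rw [hη]; field_simp; ring
  have hinner := mul_le_mul_of_nonneg_left (norm_sq_sub_mul_le_inner hg) hη_pos.le
  linarith

end GradientStep

theorem stmt_5_general {d : ℕ} (f : EuclideanSpace ℝ (Fin d) → ℝ)
    (f' : EuclideanSpace ℝ (Fin d) → EuclideanSpace ℝ (Fin d))
    (hf' : ∀ x, HasGradientAt f (f' x) x)
    (L : ℝ) (hL : 0 < L)
    (hsmooth : ∀ x y, ‖f' x - f' y‖ ≤ L * ‖x - y‖)
    (ε : ℝ)
    (w g : EuclideanSpace ℝ (Fin d))
    (hg : ‖g - f' w‖ ≤ ε) (hgnorm : 4 * ε ≤ ‖g‖) :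
    f (w - (1 / (2 * L)) • g) - f w ≤ (1 / (2 * L)) * ‖g‖ * (ε - 3 * ‖g‖ / 4)
    ∧ (0 < ‖g‖ → f (w - (1 / (2 * L)) • g) < f w) := by
  have hbound := approx_gradient_step_sub_le hf' hL hsmooth hg
  refine ⟨hbound, fun hg_pos => ?_⟩
  have hneg : (1 / (2 * L)) * ‖g‖ * (ε - 3 * ‖g‖ / 4) < 0 :=
    mul_neg_of_pos_of_neg (by positivity) (by linarith)
  linarith

/-- One approximate gradient step decreases the function value:
`f(w⁺) - f(w) ≤ (1/(2L))‖g‖(ε - 3‖g‖/4)`, and `f(w⁺) < f(w)` when `‖g‖ > 0`. -/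
theorem stmt_5 {d : ℕ} (f : EuclideanSpace ℝ (Fin d) → ℝ)
    (f' : EuclideanSpace ℝ (Fin d) → EuclideanSpace ℝ (Fin d))
    (hf' : ∀ x, HasGradientAt f (f' x) x)
    (hconv : ConvexOn ℝ Set.univ f)
    (L : ℝ) (hL : 0 < L)
    (hsmooth : ∀ x y, ‖f' x - f' y‖ ≤ L * ‖x - y‖)
    (ε : ℝ) (hε : 0 ≤ ε)
    (w g : EuclideanSpace ℝ (Fin d))
    (hg : ‖g - f' w‖ ≤ ε) (hgnorm : 4 * ε ≤ ‖g‖) :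
    f (w - (1 / (2 * L)) • g) - f w ≤ (1 / (2 * L)) * ‖g‖ * (ε - 3 * ‖g‖ / 4)
    ∧ (0 < ‖g‖ → f (w - (1 / (2 * L)) • g) < f w) :=
  stmt_5_general f f' hf' L hL hsmooth ε w g hg hgnorm
end

section
/- Let f: ℝᵈ → ℝ be convex and L-smooth with minimizer w*. Let wₖ, gₖ ∈ ℝᵈ with ‖gₖ - ∇f(wₖ)‖ ≤ ε and ‖gₖ‖ ≥ 4ε, and set wₖ₊₁ = wₖ - gₖ/(2L). Then ‖wₖ₊₁ - w*‖² - ‖wₖ - w*‖² ≤ (f(w*) - f(wₖ₊₁) + ε‖wₖ - w*‖)/L. -/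
/-!
The step satisfies the identity
`‖wₖ₊₁ - w*‖² - ‖wₖ - w*‖² = (⟪gₖ, w* - wₖ⟫ + ‖gₖ‖² / (4L)) / L`.
Convexity, corrected by the gradient error, bounds `⟪gₖ, w* - wₖ⟫` by `f w* - f wₖ + ε ‖wₖ - w*‖`.
Since `‖gₖ‖ ≥ 4ε`, the inexact direction still satisfies `⟪∇f wₖ, gₖ⟫ ≥ (3/4) ‖gₖ‖²`, so the descent
lemma yields the sufficient decrease `f wₖ₊₁ ≤ f wₖ - ‖gₖ‖² / (4L)`, which absorbs the `‖gₖ‖²` term.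
-/

open scoped RealInnerProductSpace

section Gradient

variable {E : Type*} [NormedAddCommGroup E] [InnerProductSpace ℝ E]
  {f : E → ℝ} {f' : E → E} {g x v : E} {s : Set E} {t ε L : ℝ}

theorem inner_le_inner_add_of_norm_sub_le {a b : E} (h : ‖a - b‖ ≤ ε) (u : E) :
    ⟪a, u⟫ ≤ ⟪b, u⟫ + ε * ‖u‖ := by
  have : ⟪a - b, u⟫ ≤ ε * ‖u‖ :=
    (real_inner_le_norm _ _).trans (mul_le_mul_of_nonneg_right h (norm_nonneg u))
  rwa [inner_sub_left, sub_le_iff_le_add'] at this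

variable [CompleteSpace E]

theorem HasGradientAt.hasDerivAt_comp_add_smul (hf : HasGradientAt f g (x + t • v)) :
    HasDerivAt (fun r : ℝ => f (x + r • v)) ⟪g, v⟫ t := by
  have hline : HasDerivAt (fun r : ℝ => x + r • v) v t := by
    simpa using ((hasDerivAt_id t).smul_const v).const_add x
  have h := hf.hasFDerivAt.comp_hasDerivAt t hline
  simp only [InnerProductSpace.toDual_apply_apply] at h
  exact h

theorem ConvexOn.inner_gradient_le_sub {y : E} (hconv : ConvexOn ℝ s f) (hx : x ∈ s) (hy : y ∈ s)
    (hf : HasGradientAt f g x) : ⟪g, y - x⟫ ≤ f y - f x := by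
  have hcomp : f ∘ AffineMap.lineMap x y = fun t : ℝ => f (x + t • (y - x)) := by
    funext t
    simp [AffineMap.lineMap_apply, add_comm]
  have hline := hconv.comp_affineMap (AffineMap.lineMap x y)
  rw [hcomp] at hline
  have hderiv := HasGradientAt.hasDerivAt_comp_add_smul (t := 0) (v := y - x) (by simpa using hf)
  simpa [slope_def_field] using
    hline.le_slope_of_hasDerivAt (by simpa using hx) (by simpa using hy) one_pos hderiv

theorem le_add_inner_gradient_add_sq (hf : ∀ z, HasGradientAt f (f' z) z)
    (hsmooth : ∀ z, ‖f' z - f' x‖ ≤ L * ‖z - x‖) (y : E) :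
    f y ≤ f x + ⟪f' x, y - x⟫ + L / 2 * ‖y - x‖ ^ 2 := by
  set v := y - x
  -- `φ` is `f` on the ray `x + t • v` minus its quadratic upper model; it is antitone for `t ≥ 0`.
  set φ : ℝ → ℝ := fun t => f (x + t • v) - t * ⟪f' x, v⟫ - L / 2 * ‖v‖ ^ 2 * t ^ 2
  have hφ : ∀ t, HasDerivAt φ (⟪f' (x + t • v), v⟫ - ⟪f' x, v⟫ - L * ‖v‖ ^ 2 * t) t := by
    intro t
    have h := (((hf (x + t • v)).hasDerivAt_comp_add_smul).sub
      ((hasDerivAt_id t).mul_const ⟪f' x, v⟫)).sub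
      ((hasDerivAt_pow 2 t).const_mul (L / 2 * ‖v‖ ^ 2))
    exact h.congr_deriv (by norm_num; ring)
  have hφ'_nonpos : ∀ t ∈ interior (Set.Ici (0 : ℝ)),
      ⟪f' (x + t • v), v⟫ - ⟪f' x, v⟫ - L * ‖v‖ ^ 2 * t ≤ 0 := by
    intro t ht
    rw [interior_Ici, Set.mem_Ioi] at ht
    have hlip : ‖f' (x + t • v) - f' x‖ ≤ L * (t * ‖v‖) := by
      simpa [norm_smul, abs_of_pos ht] using hsmooth (x + t • v)
    have := inner_le_inner_add_of_norm_sub_le hlip v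
    nlinarith [norm_nonneg v]
  have hanti := antitoneOn_of_hasDerivWithinAt_nonpos (convex_Ici 0)
    (fun t _ => (hφ t).continuousAt.continuousWithinAt)
    (fun t _ => (hφ t).hasDerivWithinAt) hφ'_nonpos
  have := hanti Set.self_mem_Ici (Set.mem_Ici.mpr zero_le_one) zero_le_one
  simp only [φ, zero_smul, add_zero, one_smul, zero_mul, sub_zero, one_mul, one_pow,
    mul_one] at this
  rw [add_sub_cancel x y] at this
  linarith

theorem le_sub_of_approx_gradient_step (hf : ∀ z, HasGradientAt f (f' z) z) (hL : 0 < L)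
    (hsmooth : ∀ z, ‖f' z - f' x‖ ≤ L * ‖z - x‖) (hg : ‖g - f' x‖ ≤ ε) (hgnorm : 4 * ε ≤ ‖g‖) :
    f (x - (1 / (2 * L)) • g) ≤ f x - ‖g‖ ^ 2 / (4 * L) := by
  have hdescent := le_add_inner_gradient_add_sq hf hsmooth (x - (1 / (2 * L)) • g)
  rw [sub_sub_cancel_left, inner_neg_right, inner_smul_right, norm_neg, norm_smul,
    Real.norm_of_nonneg (by positivity)] at hdescent
  have hinner : 3 / 4 * ‖g‖ ^ 2 ≤ ⟪f' x, g⟫ := by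
    have := inner_le_inner_add_of_norm_sub_le hg g
    rw [real_inner_self_eq_norm_sq] at this
    nlinarith [norm_nonneg g]
  calc f (x - (1 / (2 * L)) • g) ≤ f x - (⟪f' x, g⟫ - ‖g‖ ^ 2 / 4) / (2 * L) := by
        convert hdescent using 1
        field_simp
        ring
    _ ≤ f x - ‖g‖ ^ 2 / 2 / (2 * L) := by gcongr; linarith
    _ = f x - ‖g‖ ^ 2 / (4 * L) := by ring

end Gradient

theorem stmt_6_general {d : ℕ} (f : EuclideanSpace ℝ (Fin d) → ℝ)
    (f' : EuclideanSpace ℝ (Fin d) → EuclideanSpace ℝ (Fin d))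
    (hf' : ∀ x, HasGradientAt f (f' x) x)
    (hconv : ConvexOn ℝ Set.univ f)
    (L : ℝ) (hL : 0 < L)
    (hsmooth : ∀ x y, ‖f' x - f' y‖ ≤ L * ‖x - y‖)
    (wstar : EuclideanSpace ℝ (Fin d))
    (ε : ℝ)
    (wk gk : EuclideanSpace ℝ (Fin d))
    (hg : ‖gk - f' wk‖ ≤ ε) (hgnorm : 4 * ε ≤ ‖gk‖) :
    ‖(wk - (1 / (2 * L)) • gk) - wstar‖ ^ 2 - ‖wk - wstar‖ ^ 2
      ≤ (f wstar - f (wk - (1 / (2 * L)) • gk) + ε * ‖wk - wstar‖) / L := by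
  have hdist : ‖(wk - (1 / (2 * L)) • gk) - wstar‖ ^ 2 - ‖wk - wstar‖ ^ 2
      = (⟪gk, wstar - wk⟫ + ‖gk‖ ^ 2 / (4 * L)) / L := by
    rw [sub_right_comm, norm_sub_sq_real, inner_smul_right, norm_smul,
      Real.norm_of_nonneg (by positivity), real_inner_comm, ← neg_sub wstar wk, inner_neg_right]
    field_simp
    ring
  have hfirst_order : ⟪gk, wstar - wk⟫ ≤ f wstar - f wk + ε * ‖wk - wstar‖ := by
    have hconv_ineq := hconv.inner_gradient_le_sub (Set.mem_univ wk) (Set.mem_univ wstar) (hf' wk)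
    have herror := inner_le_inner_add_of_norm_sub_le hg (wstar - wk)
    rw [norm_sub_rev] at herror
    linarith
  have hdecrease := le_sub_of_approx_gradient_step hf' hL (fun z => hsmooth z wk) hg hgnorm
  rw [hdist]
  exact div_le_div_of_nonneg_right (by linarith) hL.le

/-- Distance-to-optimum evolution of one approximate gradient step:
`‖wₖ₊₁ - w*‖² - ‖wₖ - w*‖² ≤ (f(w*) - f(wₖ₊₁) + ε‖wₖ - w*‖)/L`. -/
theorem stmt_6 {d : ℕ} (f : EuclideanSpace ℝ (Fin d) → ℝ)
    (f' : EuclideanSpace ℝ (Fin d) → EuclideanSpace ℝ (Fin d))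
    (hf' : ∀ x, HasGradientAt f (f' x) x)
    (hconv : ConvexOn ℝ Set.univ f)
    (L : ℝ) (hL : 0 < L)
    (hsmooth : ∀ x y, ‖f' x - f' y‖ ≤ L * ‖x - y‖)
    (wstar : EuclideanSpace ℝ (Fin d)) (hmin : ∀ x, f wstar ≤ f x)
    (ε : ℝ) (hε : 0 ≤ ε)
    (wk gk : EuclideanSpace ℝ (Fin d))
    (hg : ‖gk - f' wk‖ ≤ ε) (hgnorm : 4 * ε ≤ ‖gk‖) :
    ‖(wk - (1 / (2 * L)) • gk) - wstar‖ ^ 2 - ‖wk - wstar‖ ^ 2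
      ≤ (f wstar - f (wk - (1 / (2 * L)) • gk) + ε * ‖wk - wstar‖) / L :=
  stmt_6_general f f' hf' hconv L hL hsmooth wstar ε wk gk hg hgnorm
end
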